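/- arXiv:math/0607823 — 2 statements merged into one kernel-verified Lean document; each statement's English description precedes it below -/
import Mathlib

section
/- For a nonnegative integer n and parameters a, b, c, d: Σ_{i=0}^{n} (-n)_i (a)_i (b)_i / (i! (c)_i (d)_i) = (-1)^n [(d-a)_n (d-b)_n / ((c)_n (d)_n)] · Σ_{i=0}^{n} (-n)_i (a+b-n+1-c-d)_i (1-d-n)_i / (i! (a-d+1-n)_i (b-d+1-n)_i), assuming all Pochhammer symbols appearing in denominators are nonzero. -/
noncomputable def poch (x : ℝ) (n : ℕ) : ℝ := ∏ i ∈ Finset.range n, (x + i)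

/-!
Clearing the denominators `(c)_n (d)_n` turns `₃F₂(-n, a, b; c, d; 1)` into a polynomial in the
parameters. Expanding `(b)_i` by Chu–Vandermonde, exchanging the sums and resumming by
Chu–Vandermonde again yields Sheppard's transformation
`₃F₂(-n, a, b; c, d; 1) ∝ ₃F₂(-n, a, c - b; c, 1 + a - d - n; 1)`. The reversal formula is the
composite of three Sheppard transformations, interleaved with the symmetries of the series in its
upper and in its lower parameters.
-/

open Finset Polynomial

lemma poch_eq_ascPochhammer_eval (x : ℝ) (n : ℕ) : poch x n = (ascPochhammer ℝ n).eval x := by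
  induction n with
  | zero => simp [poch]
  | succ n ih => rw [poch, prod_range_succ, ← poch, ih, ascPochhammer_succ_eval]

lemma poch_eq_smeval_descPochhammer (x : ℝ) (n : ℕ) :
    poch x n = (descPochhammer ℤ n).smeval (x + n - 1) := by
  rw [descPochhammer_smeval_eq_ascPochhammer, ascPochhammer_smeval_eq_eval,
    poch_eq_ascPochhammer_eval]
  ring_nf

lemma poch_add (x : ℝ) (i j : ℕ) : poch x (i + j) = poch x i * poch (x + i) j := by
  simp only [poch, prod_range_add, add_assoc, Nat.cast_add]

lemma poch_one_sub_sub (x : ℝ) (m : ℕ) : poch (1 - x - m) m = (-1) ^ m * poch x m := by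
  have h := ascPochhammer_eval_neg_eq_descPochhammer ℝ (-x) m
  rw [neg_neg, descPochhammer_eval_eq_ascPochhammer] at h
  rw [poch_eq_ascPochhammer_eval, poch_eq_ascPochhammer_eval, h, ← mul_assoc, ← mul_pow]
  ring_nf

lemma poch_neg_natCast (n i : ℕ) :
    poch (-(n : ℝ)) i = (-1) ^ i * (i.factorial : ℝ) * (n.choose i : ℝ) := by
  rw [poch_eq_ascPochhammer_eval, ascPochhammer_eval_neg_eq_descPochhammer,
    descPochhammer_eval_eq_descFactorial, Nat.descFactorial_eq_factorial_mul_choose]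
  push_cast
  ring

lemma poch_sub_eq_sum_choose (x y : ℝ) (m : ℕ) :
    poch (y - x) m = ∑ k ∈ range (m + 1),
      (-1) ^ k * (m.choose k : ℝ) * poch x k * poch (y + k) (m - k) := by
  rw [poch_eq_smeval_descPochhammer, show y - x + m - 1 = -x + (y + m - 1) by ring,
    Ring.descPochhammer_smeval_add _ (Commute.all _ _), Nat.sum_antidiagonal_eq_sum_range_succ
      (fun i j => (m.choose i : ℝ) *
        ((descPochhammer ℤ i).smeval (-x) * (descPochhammer ℤ j).smeval (y + m - 1)))]
  refine sum_congr rfl fun k hk => ?_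
  have hkm : k ≤ m := Nat.lt_succ_iff.mp (mem_range.mp hk)
  have hx : (descPochhammer ℤ k).smeval (-x) = (-1) ^ k * poch x k := by
    rw [← poch_one_sub_sub, poch_eq_smeval_descPochhammer]
    ring_nf
  have hy : (descPochhammer ℤ (m - k)).smeval (y + m - 1) = poch (y + k) (m - k) := by
    rw [poch_eq_smeval_descPochhammer, Nat.cast_sub hkm]
    ring_nf
  rw [hx, hy]
  ring

/-- `(c)_n (d)_n · ₃F₂(-n, a, b; c, d; 1)`, written without denominators so that it is defined
for all parameters. -/
noncomputable def clearedF32 (n : ℕ) (a b c d : ℝ) : ℝ :=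
  ∑ i ∈ range (n + 1), (-1) ^ i * (n.choose i : ℝ) * poch a i * poch b i *
    poch (c + i) (n - i) * poch (d + i) (n - i)

lemma clearedF32_comm_upper (n : ℕ) (a b c d : ℝ) :
    clearedF32 n a b c d = clearedF32 n b a c d :=
  sum_congr rfl fun _ _ => by ring

lemma clearedF32_comm_lower (n : ℕ) (a b c d : ℝ) :
    clearedF32 n a b c d = clearedF32 n a b d c :=
  sum_congr rfl fun _ _ => by ring

lemma clearedF32_summand_split (a b c d : ℝ) (k j r : ℕ) :
    (-1) ^ (k + j) * ((k + j + r).choose (k + j) : ℝ) * poch a (k + j) *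
        ((-1) ^ k * ((k + j).choose k : ℝ) * poch (d - b) k * poch (d + k) j) *
        poch (c + (k + j : ℕ)) r * poch (d + (k + j : ℕ)) r =
      ((k + j + r).choose k : ℝ) * poch a k * poch (d - b) k * poch (d + k) (j + r) *
        ((-1) ^ j * ((j + r).choose j : ℝ) * poch (a + k) j * poch (c + k + j) r) := by
  have hsign : ((-1 : ℝ) ^ k) * (-1) ^ k = 1 := by rw [← pow_add, Even.neg_one_pow ⟨k, rfl⟩]
  have hchoose : ((k + j + r).choose (k + j) : ℝ) * ((k + j).choose k : ℝ) =
      ((k + j + r).choose k : ℝ) * ((j + r).choose j : ℝ) := by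
    rw [← Nat.cast_mul, ← Nat.cast_mul, Nat.choose_mul (Nat.le_add_right k j)]
    simp only [add_assoc, Nat.add_sub_cancel_left]
  rw [poch_add a k j, poch_add (d + k) j r, pow_add]
  push_cast
  simp only [← add_assoc]
  linear_combination (-1) ^ j * poch a k * poch (a + k) j * poch (d - b) k * poch (d + k) j *
    poch (c + k + j) r * poch (d + k + j) r *
    (((k + j + r).choose (k + j) : ℝ) * ((k + j).choose k : ℝ) * hsign + hchoose)

lemma clearedF32_eq_sum_poch_sub (n : ℕ) (a b c d : ℝ) :
    clearedF32 n a b c d = ∑ k ∈ range (n + 1),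
      (n.choose k : ℝ) * poch a k * poch (d - b) k * poch (c - a) (n - k) *
        poch (d + k) (n - k) := by
  have hb : ∀ i, poch b i = ∑ k ∈ range (i + 1),
      (-1) ^ k * (i.choose k : ℝ) * poch (d - b) k * poch (d + k) (i - k) := fun i => by
    rw [← poch_sub_eq_sum_choose, sub_sub_cancel]
  calc clearedF32 n a b c d
      = ∑ i ∈ range (n + 1), ∑ k ∈ range (i + 1),
          (-1) ^ i * (n.choose i : ℝ) * poch a i *
            ((-1) ^ k * (i.choose k : ℝ) * poch (d - b) k * poch (d + k) (i - k)) *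
            poch (c + i) (n - i) * poch (d + i) (n - i) := by
        simp only [clearedF32, hb, mul_sum, sum_mul]
    _ = ∑ k ∈ range (n + 1), ∑ i ∈ Ico k (n + 1),
          (-1) ^ i * (n.choose i : ℝ) * poch a i *
            ((-1) ^ k * (i.choose k : ℝ) * poch (d - b) k * poch (d + k) (i - k)) *
            poch (c + i) (n - i) * poch (d + i) (n - i) :=
        sum_comm' fun i k => by simp only [mem_range, mem_Ico]; omega
    _ = ∑ k ∈ range (n + 1),
          (n.choose k : ℝ) * poch a k * poch (d - b) k * poch (d + k) (n - k) *
          ∑ j ∈ range (n - k + 1),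
            (-1) ^ j * ((n - k).choose j : ℝ) * poch (a + k) j * poch (c + k + j) (n - k - j) := by
        refine sum_congr rfl fun k hk => ?_
        have hkn : k ≤ n := Nat.lt_succ_iff.mp (mem_range.mp hk)
        rw [sum_Ico_eq_sum_range, mul_sum, Nat.sub_add_comm hkn]
        refine sum_congr rfl fun j hj => ?_
        obtain ⟨r, rfl⟩ : ∃ r, n = k + j + r := ⟨n - k - j, by have := mem_range.mp hj; omega⟩
        rw [show k + j + r - k = j + r by omega, show k + j - k = j by omega,
          show k + j + r - (k + j) = r by omega, show j + r - j = r by omega]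
        exact clearedF32_summand_split a b c d k j r
    _ = _ := by
        refine sum_congr rfl fun k _ => ?_
        rw [← poch_sub_eq_sum_choose, add_sub_add_right_eq_sub]
        ring

lemma clearedF32_sheppard (n : ℕ) (a b c d : ℝ) :
    clearedF32 n a b c d = (-1) ^ n * clearedF32 n a (c - b) c (1 + a - d - n) := by
  rw [clearedF32_comm_upper, clearedF32_eq_sum_poch_sub, clearedF32_comm_upper,
    clearedF32_eq_sum_poch_sub, ← sum_range_reflect, mul_sum]
  refine sum_congr rfl fun k hk => ?_
  obtain ⟨j, rfl⟩ : ∃ j, n = k + j := ⟨n - k, by have := mem_range.mp hk; omega⟩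
  have hsign : (-1 : ℝ) ^ (k + j) * ((-1) ^ j * (-1) ^ k) = 1 := by
    rw [← pow_add, ← pow_add, add_comm j k, Even.neg_one_pow ⟨_, rfl⟩]
  simp only [Nat.add_sub_cancel, Nat.add_sub_cancel_left]
  rw [show 1 + a - d - ((k + j : ℕ) : ℝ) - a = 1 - (d + j) - k by push_cast; ring,
    show 1 + a - d - ((k + j : ℕ) : ℝ) + k = 1 - (d - a) - j by push_cast; ring,
    poch_one_sub_sub, poch_one_sub_sub, sub_sub_cancel, Nat.choose_symm_add]
  linear_combination (-((k + j).choose j : ℝ) * poch (c - b) k * poch (d + j) k *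
    poch b j * poch (d - a) j) * hsign

lemma clearedF32_reversal (n : ℕ) (a b c d : ℝ) :
    clearedF32 n a b c d =
      (-1) ^ n *
        clearedF32 n (a + b - n + 1 - c - d) (1 - d - n) (a - d + 1 - n) (b - d + 1 - n) := by
  have hsign : (-1 : ℝ) ^ n * (-1) ^ n = 1 := by rw [← pow_add, Even.neg_one_pow ⟨n, rfl⟩]
  calc clearedF32 n a b c d
      = (-1) ^ n * clearedF32 n a (c - b) (1 + a - d - n) c := by
        rw [clearedF32_sheppard, clearedF32_comm_lower]
    _ = clearedF32 n (1 + a + b - c - d - n) a (1 + a - d - n) (1 + a - c - n) := by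
        rw [clearedF32_sheppard, ← mul_assoc, hsign, one_mul, clearedF32_comm_upper]
        ring_nf
    _ = _ := by
        rw [clearedF32_sheppard]
        ring_nf

lemma sum_div_eq_clearedF32_div (n : ℕ) (a b c d : ℝ) (hc : poch c n ≠ 0) (hd : poch d n ≠ 0) :
    ∑ i ∈ range (n + 1), poch (-(n : ℝ)) i * poch a i * poch b i /
        ((i.factorial : ℝ) * poch c i * poch d i) =
      clearedF32 n a b c d / (poch c n * poch d n) := by
  rw [clearedF32, sum_div]
  refine sum_congr rfl fun i hi => ?_
  obtain ⟨j, rfl⟩ : ∃ j, n = i + j := ⟨n - i, by have := mem_range.mp hi; omega⟩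
  obtain ⟨hc₁, hc₂⟩ := mul_ne_zero_iff.mp (poch_add c i j ▸ hc)
  obtain ⟨hd₁, hd₂⟩ := mul_ne_zero_iff.mp (poch_add d i j ▸ hd)
  rw [poch_neg_natCast, poch_add c, poch_add d, Nat.add_sub_cancel_left]
  have hfact := i.factorial_ne_zero
  field_simp

/-- Reversal transformation for terminating ₃F₂ series at unit argument. -/
theorem stmt4 (n : ℕ) (a b c d : ℝ)
    (hc : ∀ i ≤ n, poch c i ≠ 0) (hd : ∀ i ≤ n, poch d i ≠ 0)
    (h1 : ∀ i ≤ n, poch (a - d + 1 - n) i ≠ 0)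
    (h2 : ∀ i ≤ n, poch (b - d + 1 - n) i ≠ 0) :
    ∑ i ∈ Finset.range (n + 1),
      poch (-(n : ℝ)) i * poch a i * poch b i /
        ((Nat.factorial i : ℝ) * poch c i * poch d i)
    = (-1 : ℝ) ^ n * (poch (d - a) n * poch (d - b) n / (poch c n * poch d n)) *
      ∑ i ∈ Finset.range (n + 1),
        poch (-(n : ℝ)) i * poch (a + b - n + 1 - c - d) i * poch (1 - d - n) i /
          ((Nat.factorial i : ℝ) * poch (a - d + 1 - n) i * poch (b - d + 1 - n) i) := by
  have hA : poch (a - d + 1 - n) n = (-1) ^ n * poch (d - a) n := by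
    rw [← poch_one_sub_sub]; ring_nf
  have hB : poch (b - d + 1 - n) n = (-1) ^ n * poch (d - b) n := by
    rw [← poch_one_sub_sub]; ring_nf
  have hda : poch (d - a) n ≠ 0 := right_ne_zero_of_mul (hA ▸ h1 n le_rfl)
  have hdb : poch (d - b) n ≠ 0 := right_ne_zero_of_mul (hB ▸ h2 n le_rfl)
  have hcn := hc n le_rfl
  have hdn := hd n le_rfl
  have hsign : (-1 : ℝ) ^ n * (-1) ^ n = 1 := by rw [← pow_add, Even.neg_one_pow ⟨n, rfl⟩]
  rw [sum_div_eq_clearedF32_div n a b c d hcn hdn,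
    sum_div_eq_clearedF32_div _ _ _ _ _ (h1 n le_rfl) (h2 n le_rfl), clearedF32_reversal, hA, hB]
  field_simp
  rw [sq, hsign, one_mul]
end

section
/- Define F(n; u, v₁, v₂, v₃) = Σ_{i=0}^{⌊n/2⌋} (-n/2)_i ((1-n)/2)_i (u)_i (-u - v₁ - v₂ - v₃)_i / (i! (1/2 - v₁ - n)_i (1/2 - v₂)_i (1/2 - v₃)_i). Then for every nonnegative integer n and parameters κ, v₁, v₂, v₃ (avoiding singularities), the three-term recurrence holds: n(n+2v₁)(n+κ+v₁-1/2)(κ+1/2+v₂+v₃-n) F(n-1; κ, v₁, v₂, v₃) + [n(n+2v₁)(n-v₂-v₃-1/2) + (n+1/2+v₁)(n-2v₂)(n-2v₃)](n+v₁-1/2) F(n; κ, v₁, v₂, v₃) = (n+v₁-1/2)(n+v₁+1/2)(n-2v₂)(n-2v₃) F(n+1; κ, v₁, v₂, v₃). -/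
/-- The balanced terminating ₄F₃ function F(n; u, v₁, v₂, v₃). -/
noncomputable def F (n : ℕ) (u v₁ v₂ v₃ : ℝ) : ℝ :=
  ∑ i ∈ Finset.range (n / 2 + 1),
    poch (-(n : ℝ) / 2) i * poch ((1 - (n : ℝ)) / 2) i * poch u i *
        poch (-u - v₁ - v₂ - v₃) i /
      ((Nat.factorial i : ℝ) * poch (1/2 - v₁ - (n : ℝ)) i * poch (1/2 - v₂) i *
        poch (1/2 - v₃) i)

open Finset

lemma poch_zero (x : ℝ) : poch x 0 = 1 := prod_range_zero _

lemma poch_one (x : ℝ) : poch x 1 = x := by simp [poch]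

lemma poch_succ (x : ℝ) (i : ℕ) : poch x (i + 1) = poch x i * (x + i) := prod_range_succ _ _

lemma poch_add_one_mul (x : ℝ) (i : ℕ) : poch (x + 1) i * x = poch x i * (x + i) := by
  rw [← poch_succ]
  unfold poch
  rw [prod_range_succ', Nat.cast_zero, add_zero]
  exact congrArg (· * x) (prod_congr rfl fun k _ => by push_cast; ring)

lemma poch_eq_poch_sub_one_mul {x : ℝ} (hx : x - 1 ≠ 0) (i : ℕ) :
    poch x i = poch (x - 1) i * (x - 1 + i) / (x - 1) := by
  rw [← poch_add_one_mul, sub_add_cancel, mul_div_cancel_right₀ _ hx]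

lemma poch_eq_zero {x : ℝ} {i j : ℕ} (hj : j < i) (hx : x + j = 0) : poch x i = 0 :=
  prod_eq_zero (mem_range.2 hj) hx

lemma add_ne_zero_of_poch_ne_zero {x : ℝ} {i j : ℕ} (hp : poch x i ≠ 0) (hj : j < i) :
    x + j ≠ 0 :=
  fun hx => hp (poch_eq_zero hj hx)

namespace F

noncomputable def term (x u v₁ v₂ v₃ : ℝ) (i : ℕ) : ℝ :=
  poch (-x / 2) i * poch ((1 - x) / 2) i * poch u i * poch (-u - v₁ - v₂ - v₃) i /
    ((Nat.factorial i : ℝ) * poch (1/2 - v₁ - x) i * poch (1/2 - v₂) i * poch (1/2 - v₃) i)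

noncomputable def stepRatio (x u v₁ v₂ v₃ : ℝ) (i : ℕ) : ℝ :=
  (-x / 2 + i) * ((1 - x) / 2 + i) * (u + i) * (-u - v₁ - v₂ - v₃ + i) /
    ((i + 1) * (1/2 - v₁ - x + i) * (1/2 - v₂ + i) * (1/2 - v₃ + i))

noncomputable def shiftRatio (x v₁ : ℝ) (i : ℕ) : ℝ :=
  ((x + 1) / 2 - i) * (x + v₁ + 1/2) / ((x + 1) / 2 * (x + v₁ + 1/2 - i))

noncomputable def certFactor (x v₁ v₂ v₃ : ℝ) (i : ℕ) : ℝ :=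
  4 * (x + 2 * v₁) * (x + v₁ - 1/2) * (x + v₁ + 1/2) * (i * (i - 1/2 - v₂) * (i - 1/2 - v₃)) /
    ((x + 1) * (x + v₁ + 1/2 - i))

noncomputable def cert (x u v₁ v₂ v₃ : ℝ) (i : ℕ) : ℝ :=
  certFactor x v₁ v₂ v₃ i * term (x + 1) u v₁ v₂ v₃ i

noncomputable def coeffPrev (x u v₁ v₂ v₃ : ℝ) : ℝ :=
  x * (x + 2 * v₁) * (x + u + v₁ - 1/2) * (u + 1/2 + v₂ + v₃ - x)

noncomputable def coeffMid (x v₁ v₂ v₃ : ℝ) : ℝ :=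
  (x * (x + 2 * v₁) * (x - v₂ - v₃ - 1/2) + (x + 1/2 + v₁) * (x - 2 * v₂) * (x - 2 * v₃)) *
    (x + v₁ - 1/2)

noncomputable def coeffNext (x v₁ v₂ v₃ : ℝ) : ℝ :=
  (x + v₁ - 1/2) * (x + v₁ + 1/2) * (x - 2 * v₂) * (x - 2 * v₃)

/-- In the last two alternatives a denominator may vanish, but so does the numerator
`N/2 - i` or `(N + 1)/2 - i` in front of it, and the identity survives with the junk value `0`. -/
lemma certificate_identity {N u v₁ v₂ v₃ : ℝ} {i : ℕ} (hN : N ≠ 0) (hN1 : N + 1 ≠ 0)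
    (hzi : N + v₁ + 1/2 - i ≠ 0)
    (h : (N + v₁ - 1/2 - i ≠ 0 ∧ 1/2 - v₂ + i ≠ 0 ∧ 1/2 - v₃ + i ≠ 0) ∨
      N = 2 * i ∨ N = 2 * i - 1) :
    coeffPrev N u v₁ v₂ v₃ * (shiftRatio N v₁ i * shiftRatio (N - 1) v₁ i)
      + coeffMid N v₁ v₂ v₃ * shiftRatio N v₁ i - coeffNext N v₁ v₂ v₃
    = certFactor N v₁ v₂ v₃ (i + 1) * stepRatio (N + 1) u v₁ v₂ v₃ i
      - certFactor N v₁ v₂ v₃ i := by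
  simp only [coeffPrev, coeffMid, coeffNext, shiftRatio, certFactor, stepRatio, sub_add_cancel]
  push_cast
  rw [show N - 1 + v₁ + 1/2 = N + v₁ - 1/2 by ring,
    show N + v₁ + 1/2 - (i + 1) = N + v₁ - 1/2 - i by ring,
    show 1/2 - v₁ - (N + 1) + i = -(N + v₁ + 1/2 - i) by ring]
  -- `field_simp` uses nonvanishing hypotheses only for atoms, hence the `generalize`s
  generalize hA : N + v₁ + 1/2 - i = A at hzi ⊢
  rcases h with ⟨hz, hB, hC⟩ | hN2 | hN2
  · rw [show (i : ℝ) + 1 - 1/2 - v₂ = 1/2 - v₂ + i by ring,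
      show (i : ℝ) + 1 - 1/2 - v₃ = 1/2 - v₃ + i by ring]
    generalize hA' : N + v₁ - 1/2 - i = A' at hz ⊢
    generalize hB' : 1/2 - v₂ + (i : ℝ) = B at hB ⊢
    generalize hC' : 1/2 - v₃ + (i : ℝ) = C at hC ⊢
    field_simp
    subst hA hA' hB' hC'
    ring
  · rw [show N / 2 - i = 0 by linarith, show (1 - (N + 1)) / 2 + i = 0 by linarith]
    field_simp
    subst hA hN2
    ring
  · rw [show (N + 1) / 2 - i = 0 by linarith, show -(N + 1) / 2 + i = 0 by linarith]
    field_simp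
    subst hA hN2
    ring

variable (u v₁ v₂ v₃ : ℝ)

lemma term_zero (x : ℝ) : term x u v₁ v₂ v₃ 0 = 1 := by simp [term, poch_zero]

lemma term_succ (x : ℝ) (i : ℕ) :
    term x u v₁ v₂ v₃ (i + 1) = term x u v₁ v₂ v₃ i * stepRatio x u v₁ v₂ v₃ i := by
  simp only [term, stepRatio, poch_succ, Nat.factorial_succ, Nat.cast_mul, Nat.cast_succ,
    div_eq_mul_inv, mul_inv]
  ring

lemma term_eq_mul_shiftRatio {x : ℝ} (hx : x + 1 ≠ 0) (hz : x + v₁ + 1/2 ≠ 0) (i : ℕ) :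
    term x u v₁ v₂ v₃ i = term (x + 1) u v₁ v₂ v₃ i * shiftRatio x v₁ i := by
  have hb : (1 - x) / 2 - 1 ≠ 0 := by contrapose! hx; linarith
  have hz' : 1/2 - v₁ - x - 1 ≠ 0 := by contrapose! hz; linarith
  have hraw : term x u v₁ v₂ v₃ i = term (x + 1) u v₁ v₂ v₃ i *
      (((1 - x) / 2 - 1 + i) * (1/2 - v₁ - x - 1) / (((1 - x) / 2 - 1) * (1/2 - v₁ - x - 1 + i))) := by
    simp only [term, poch_eq_poch_sub_one_mul hb i, poch_eq_poch_sub_one_mul hz' i]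
    rw [show -(x + 1) / 2 = (1 - x) / 2 - 1 by ring, show (1 - (x + 1)) / 2 = -x / 2 by ring,
      show 1/2 - v₁ - (x + 1) = 1/2 - v₁ - x - 1 by ring]
    simp only [div_eq_mul_inv, mul_inv, inv_inv]
    ring
  rw [hraw, shiftRatio]
  ring

lemma term_eq_zero {m i : ℕ} (hi : m / 2 < i) : term m u v₁ v₂ v₃ i = 0 := by
  rcases Nat.even_or_odd' m with ⟨k, rfl | rfl⟩
  · rw [term, poch_eq_zero (x := -((2 * k : ℕ) : ℝ) / 2) (j := k) (by omega) (by push_cast; ring)]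
    simp
  · rw [term, poch_eq_zero (x := (1 - ((2 * k + 1 : ℕ) : ℝ)) / 2) (j := k) (by omega)
      (by push_cast; ring)]
    simp

lemma cert_zero (x : ℝ) : cert x u v₁ v₂ v₃ 0 = 0 := by simp [cert, certFactor]

lemma term_recurrence {n i : ℕ} (hn : n ≠ 0) (hz : (n : ℝ) + v₁ - 1/2 ≠ 0)
    (hz' : (n : ℝ) + v₁ + 1/2 ≠ 0) (hzi : (n : ℝ) + v₁ + 1/2 - i ≠ 0) (hi : i ≤ (n + 1) / 2)
    (hlt : i < (n + 1) / 2 →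
      (n : ℝ) + v₁ - 1/2 - i ≠ 0 ∧ 1/2 - v₂ + i ≠ 0 ∧ 1/2 - v₃ + i ≠ 0) :
    coeffPrev n u v₁ v₂ v₃ * term (n - 1) u v₁ v₂ v₃ i + coeffMid n v₁ v₂ v₃ * term n u v₁ v₂ v₃ i
      - coeffNext n v₁ v₂ v₃ * term (n + 1) u v₁ v₂ v₃ i
    = cert n u v₁ v₂ v₃ (i + 1) - cert n u v₁ v₂ v₃ i := by
  have hN : (n : ℝ) ≠ 0 := by exact_mod_cast hn
  have hN1 : (n : ℝ) + 1 ≠ 0 := by positivity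
  have hcase : ((n : ℝ) + v₁ - 1/2 - i ≠ 0 ∧ 1/2 - v₂ + i ≠ 0 ∧ 1/2 - v₃ + i ≠ 0) ∨
      (n : ℝ) = 2 * i ∨ (n : ℝ) = 2 * i - 1 := by
    rcases hi.lt_or_eq with hi | hi
    · exact Or.inl (hlt hi)
    · rcases (show n = 2 * i ∨ n + 1 = 2 * i by omega) with h | h
      · exact Or.inr (Or.inl (by exact_mod_cast h))
      · exact Or.inr (Or.inr (by rw [eq_sub_iff_add_eq]; exact_mod_cast h))
  have hprev := term_eq_mul_shiftRatio u v₁ v₂ v₃ (x := (n : ℝ) - 1) (by simpa using hN)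
    (by convert hz using 1; ring) i
  rw [sub_add_cancel] at hprev
  rw [hprev, term_eq_mul_shiftRatio u v₁ v₂ v₃ hN1 hz' i, cert, cert, term_succ]
  linear_combination term ((n : ℝ) + 1) u v₁ v₂ v₃ i * certificate_identity hN hN1 hzi hcase

end F

open F

section

variable (u v₁ v₂ v₃ : ℝ)

lemma F_eq_sum_term {m K : ℕ} (hK : m / 2 ≤ K) :
    F m u v₁ v₂ v₃ = ∑ i ∈ range (K + 1), term m u v₁ v₂ v₃ i :=
  sum_subset (range_subset_range.2 (by omega)) fun _ _ hi =>
    term_eq_zero u v₁ v₂ v₃ (by simp at hi; omega)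

lemma F_zero : F 0 u v₁ v₂ v₃ = 1 := by simp [F_eq_sum_term u v₁ v₂ v₃ le_rfl, term_zero]

lemma F_one : F 1 u v₁ v₂ v₃ = 1 := by simp [F_eq_sum_term u v₁ v₂ v₃ le_rfl, term_zero]

lemma F_two : F 2 u v₁ v₂ v₃ = 1 + stepRatio 2 u v₁ v₂ v₃ 0 := by
  rw [F_eq_sum_term (K := 1) u v₁ v₂ v₃ (by norm_num), sum_range_succ, sum_range_one, term_succ,
    term_zero, one_mul, Nat.cast_ofNat]

lemma F_recurrence_one (hz : 1/2 - v₁ - 2 ≠ 0) (hB : 1/2 - v₂ ≠ 0) (hC : 1/2 - v₃ ≠ 0) :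
    coeffPrev 1 u v₁ v₂ v₃ * F 0 u v₁ v₂ v₃ + coeffMid 1 v₁ v₂ v₃ * F 1 u v₁ v₂ v₃
      = coeffNext 1 v₁ v₂ v₃ * F 2 u v₁ v₂ v₃ := by
  rw [F_zero, F_one, F_two, coeffPrev, coeffMid, coeffNext, stepRatio]
  push_cast
  simp only [add_zero, zero_add, one_mul]
  generalize hZ : 1/2 - v₁ - 2 = Z at hz ⊢
  generalize hB' : 1/2 - v₂ = B at hB ⊢
  generalize hC' : 1/2 - v₃ = C at hC ⊢
  field_simp
  subst hZ hB' hC'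
  ring

lemma F_recurrence {n : ℕ} (hn : n ≠ 0)
    (hz : ∀ j < (n + 1) / 2, (n : ℝ) + v₁ - 1/2 - j ≠ 0) (hz' : (n : ℝ) + v₁ + 1/2 ≠ 0)
    (hB : ∀ j < (n + 1) / 2, 1/2 - v₂ + j ≠ 0) (hC : ∀ j < (n + 1) / 2, 1/2 - v₃ + j ≠ 0) :
    coeffPrev n u v₁ v₂ v₃ * F (n - 1) u v₁ v₂ v₃ + coeffMid n v₁ v₂ v₃ * F n u v₁ v₂ v₃
      = coeffNext n v₁ v₂ v₃ * F (n + 1) u v₁ v₂ v₃ := by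
  set K := (n + 1) / 2
  have hzi : ∀ i ≤ K, (n : ℝ) + v₁ + 1/2 - i ≠ 0 := by
    rintro (_ | i) hi
    · simpa using hz'
    · convert hz i (by omega) using 1; push_cast; ring
  rw [F_eq_sum_term (K := K) _ _ _ _ (by omega), F_eq_sum_term (m := n) (K := K) _ _ _ _ (by omega),
    F_eq_sum_term (K := K) _ _ _ _ (by omega), Nat.cast_pred (by omega), Nat.cast_succ,
    ← sub_eq_zero, mul_sum, mul_sum, mul_sum, ← sum_add_distrib, ← sum_sub_distrib]
  rw [sum_congr rfl fun i hi => term_recurrence u v₁ v₂ v₃ hn (by simpa using hz 0 (by omega)) hz'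
    (hzi i (by simp at hi; omega)) (by simp at hi; omega) fun hi => ⟨hz i hi, hB i hi, hC i hi⟩]
  rw [sum_range_sub, cert_zero, cert, ← Nat.cast_succ, term_eq_zero u v₁ v₂ v₃ (by omega)]
  simp

end

/-- Three-term recurrence for F. -/
theorem stmt12 (n : ℕ) (κ v₁ v₂ v₃ : ℝ)
    (h : ∀ m : ℕ, m ≤ n + 1 → ∀ i ≤ m / 2,
      poch (1/2 - v₁ - (m : ℝ)) i ≠ 0 ∧ poch (1/2 - v₂) i ≠ 0 ∧ poch (1/2 - v₃) i ≠ 0) :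
    (n : ℝ) * ((n : ℝ) + 2 * v₁) * ((n : ℝ) + κ + v₁ - 1/2) *
        (κ + 1/2 + v₂ + v₃ - (n : ℝ)) * F (n - 1) κ v₁ v₂ v₃
      + ((n : ℝ) * ((n : ℝ) + 2 * v₁) * ((n : ℝ) - v₂ - v₃ - 1/2)
          + ((n : ℝ) + 1/2 + v₁) * ((n : ℝ) - 2 * v₂) * ((n : ℝ) - 2 * v₃)) *
        ((n : ℝ) + v₁ - 1/2) * F n κ v₁ v₂ v₃
    = ((n : ℝ) + v₁ - 1/2) * ((n : ℝ) + v₁ + 1/2) * ((n : ℝ) - 2 * v₂) *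
        ((n : ℝ) - 2 * v₃) * F (n + 1) κ v₁ v₂ v₃ := by
  obtain rfl | rfl | hn := (show n = 0 ∨ n = 1 ∨ 2 ≤ n by omega)
  · rw [Nat.zero_sub, F_zero, F_one]
    push_cast
    ring
  · obtain ⟨hz, hB, hC⟩ := h 2 le_rfl 1 le_rfl
    rw [poch_one] at hz hB hC
    rw [Nat.cast_one]
    exact F_recurrence_one κ v₁ v₂ v₃ (by exact_mod_cast hz) hB hC
  · refine F_recurrence κ v₁ v₂ v₃ (by omega) ?_ ?_ (fun j hj => ?_) (fun j hj => ?_)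
    · rintro (_ | j) hj
      · have := poch_one _ ▸ (h n (by omega) 1 (by omega)).1
        contrapose! this; linarith
      · have := add_ne_zero_of_poch_ne_zero (h (n - 1) (by omega) _ le_rfl).1 (j := j) (by omega)
        contrapose! this; push_cast [Nat.cast_pred (by omega : 0 < n)] at this ⊢; linarith
    · have := poch_one _ ▸ (h (n + 1) le_rfl 1 (by omega)).1
      contrapose! this; push_cast at this ⊢; linarith
    · exact add_ne_zero_of_poch_ne_zero (h (n + 1) le_rfl _ le_rfl).2.1 hj
    · exact add_ne_zero_of_poch_ne_zero (h (n + 1) le_rfl _ le_rfl).2.2 hj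
end
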